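/- Let D be an r-identifying code of the cycle C_{2r+3} with vertices x_1,...,x_{2r+3} (indices mod 2r+3). Then: (a) there is at most one index i such that x_i ∉ D and x_{i+1} ∉ D, and (b) there is no index i such that x_i ∉ D and x_{i+2} ∉ D. -/
import Mathlib


/-- `Dr G r D x` = `N_r[x] ∩ D`. -/
def Dr {V : Type*} (G : SimpleGraph V) (r : ℕ) (D : Set V) (x : V) : Set V :=
  {y | y ∈ D ∧ G.dist x y ≤ r}

/-- `D` is an `r`-identifying code of `G`. -/
def IsIdCode {V : Type*} (G : SimpleGraph V) (r : ℕ) (D : Set V) : Prop :=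
  (∀ x, (Dr G r D x).Nonempty) ∧ ∀ x y, x ≠ y → Dr G r D x ≠ Dr G r D y

/-- `D` is an `r`-locating-dominating set of `G`. -/
def IsLD {V : Type*} (G : SimpleGraph V) (r : ℕ) (D : Set V) : Prop :=
  (∀ x ∉ D, (Dr G r D x).Nonempty) ∧
    ∀ x ∉ D, ∀ y ∉ D, x ≠ y → Dr G r D x ≠ Dr G r D y

/-- The cycle graph on `ZMod n`. -/
def cycleG (n : ℕ) : SimpleGraph (ZMod n) :=
  SimpleGraph.fromRel (fun x y => x - y = 1)

section helpers
variable (r : ℕ)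

lemma cyc_adj (x : ZMod (2*r+3)) : (cycleG (2*r+3)).Adj x (x+1) := by
  haveI : Fact (1 < 2*r+3) := ⟨by omega⟩
  refine (SimpleGraph.fromRel_adj _ _ _).mpr ⟨?_, Or.inr (by ring)⟩
  intro h
  exact one_ne_zero (left_eq_add.mp h)

lemma exists_walk_to (k : ℕ) (x y : ZMod (2*r+3)) (h : y = x + (k : ZMod (2*r+3))) :
    ∃ p : (cycleG (2*r+3)).Walk x y, p.length ≤ k := by
  induction k generalizing x with
  | zero => subst h; exact ⟨(SimpleGraph.Walk.nil).copy rfl (by push_cast; ring), by simp⟩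
  | succ k ih =>
    obtain ⟨p, hp⟩ := ih (x+1) (by rw [h]; push_cast; ring)
    exact ⟨.cons (cyc_adj r x) p, by simp; omega⟩

lemma walk_diff {x y : ZMod (2*r+3)} (p : (cycleG (2*r+3)).Walk x y) :
    ∃ t : ℤ, t.natAbs ≤ p.length ∧ (t : ZMod (2*r+3)) = y - x := by
  induction p with
  | nil => exact ⟨0, by simp, by simp⟩
  | @cons a b c h p ih =>
    obtain ⟨t, ht1, ht2⟩ := ih
    rcases ((SimpleGraph.fromRel_adj _ _ _).mp h).2 with h1 | h1
    · refine ⟨t - 1, by simp only [SimpleGraph.Walk.length_cons]; omega, ?_⟩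
      push_cast
      rw [ht2]
      have : b - a = -1 := by rw [← h1]; ring
      rw [show c - a = (c - b) + (b - a) by ring, this]; ring
    · refine ⟨t + 1, by simp only [SimpleGraph.Walk.length_cons]; omega, ?_⟩
      push_cast
      rw [ht2]
      rw [show c - a = (c - b) + (b - a) by ring, h1]

lemma ball_iff (hr : 1 ≤ r) (x y : ZMod (2*r+3)) :
    (cycleG (2*r+3)).dist x y ≤ r ↔
      y ≠ x + ((r+1 : ℕ) : ZMod (2*r+3)) ∧ y ≠ x + ((r+2 : ℕ) : ZMod (2*r+3)) := by
  haveI : NeZero (2*r+3) := ⟨by omega⟩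
  have hy : y = x + (((y - x).val : ℕ) : ZMod (2*r+3)) := by
    rw [ZMod.natCast_rightInverse (y - x)]; ring
  constructor
  · intro hd
    obtain ⟨p, -⟩ := exists_walk_to r (y-x).val x y hy
    obtain ⟨q, hq⟩ := SimpleGraph.Reachable.exists_walk_length_eq_dist ⟨p⟩
    obtain ⟨t, ht1, ht2⟩ := walk_diff r q
    rw [hq] at ht1
    have htr : t.natAbs ≤ r := le_trans ht1 hd
    constructor <;> intro hxy <;> rw [hxy] at ht2
    · have h0 : ((t - (r+1) : ℤ) : ZMod (2*r+3)) = 0 := by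
        push_cast
        rw [ht2]; push_cast; ring
      have hd2 := (ZMod.intCast_zmod_eq_zero_iff_dvd _ _).mp h0
      have := Int.eq_zero_of_dvd_of_natAbs_lt_natAbs hd2 (by omega)
      omega
    · have h0 : ((t - (r+2) : ℤ) : ZMod (2*r+3)) = 0 := by
        push_cast
        rw [ht2]; push_cast; ring
      have hd2 := (ZMod.intCast_zmod_eq_zero_iff_dvd _ _).mp h0
      have := Int.eq_zero_of_dvd_of_natAbs_lt_natAbs hd2 (by omega)
      omega
  · rintro ⟨h1, h2⟩
    set m := (y - x).val with hm
    have hmlt : m < 2*r+3 := ZMod.val_lt _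
    have hm1 : m ≠ r+1 := fun h => h1 (by rw [hy, h])
    have hm2 : m ≠ r+2 := fun h => h2 (by rw [hy, h])
    rcases le_or_gt m r with hle | hgt
    · obtain ⟨p, hp⟩ := exists_walk_to r m x y hy
      exact le_trans (le_trans (SimpleGraph.dist_le p) hp) hle
    · have hx : x = y + (((2*r+3-m : ℕ)) : ZMod (2*r+3)) := by
        rw [hy]
        rw [show x + (m : ZMod (2*r+3)) + ((2*r+3-m : ℕ) : ZMod (2*r+3))
            = x + (((m + (2*r+3-m)) : ℕ) : ZMod (2*r+3)) by push_cast; ring]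
        rw [show m + (2*r+3-m) = 2*r+3 by omega, ZMod.natCast_self]; ring
      obtain ⟨p, hp⟩ := exists_walk_to r (2*r+3-m) y x hx
      rw [SimpleGraph.dist_comm]
      exact le_trans (SimpleGraph.dist_le p) (by omega)

lemma Dr_eq (hr : 1 ≤ r) (D : Set (ZMod (2*r+3))) (x : ZMod (2*r+3)) :
    Dr (cycleG (2*r+3)) r D x =
      {z | z ∈ D ∧ z ≠ x + ((r+1 : ℕ) : ZMod (2*r+3)) ∧ z ≠ x + ((r+2 : ℕ) : ZMod (2*r+3))} := by
  ext z
  simp only [Dr, Set.mem_setOf_eq, ball_iff r hr x z]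

end helpers

theorem stmt9 (r : ℕ) (hr : 1 ≤ r) (D : Set (ZMod (2*r+3)))
    (hD : IsIdCode (cycleG (2*r+3)) r D) :
    ({i : ZMod (2*r+3) | i ∉ D ∧ i + 1 ∉ D}.Subsingleton) ∧
      ∀ i : ZMod (2*r+3), ¬(i ∉ D ∧ i + 2 ∉ D) := by
  haveI : Fact (1 < 2*r+3) := ⟨by omega⟩
  have key : ∀ i : ZMod (2*r+3),
      (i - ((r+1:ℕ) : ZMod (2*r+3))) + ((r+1:ℕ) : ZMod (2*r+3)) = i := fun i => by ring
  have key2 : ∀ i : ZMod (2*r+3),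
      (i - ((r+1:ℕ) : ZMod (2*r+3))) + ((r+2:ℕ) : ZMod (2*r+3)) = i + 1 := fun i => by
    push_cast; ring
  constructor
  · intro i hi j hj
    by_contra hne
    apply hD.2 (i - ((r+1:ℕ) : ZMod (2*r+3))) (j - ((r+1:ℕ) : ZMod (2*r+3)))
      (fun h => hne (sub_left_inj.mp h))
    rw [Dr_eq r hr, Dr_eq r hr, key, key, key2, key2]
    ext z
    simp only [Set.mem_setOf_eq]
    constructor
    · rintro ⟨hz, -, -⟩; exact ⟨hz, fun h => hj.1 (h ▸ hz), fun h => hj.2 (h ▸ hz)⟩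
    · rintro ⟨hz, -, -⟩; exact ⟨hz, fun h => hi.1 (h ▸ hz), fun h => hi.2 (h ▸ hz)⟩
  · rintro i ⟨h1, h2⟩
    refine hD.2 (i - ((r+1:ℕ) : ZMod (2*r+3))) (i - ((r+1:ℕ) : ZMod (2*r+3)) + 1)
      (fun h => one_ne_zero (left_eq_add.mp h)) ?_
    have k3 : (i - ((r+1:ℕ) : ZMod (2*r+3)) + 1) + ((r+1:ℕ) : ZMod (2*r+3)) = i + 1 := by
      push_cast; ring
    have k4 : (i - ((r+1:ℕ) : ZMod (2*r+3)) + 1) + ((r+2:ℕ) : ZMod (2*r+3)) = i + 2 := by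
      push_cast; ring
    rw [Dr_eq r hr, Dr_eq r hr, key, key2, k3, k4]
    ext z
    simp only [Set.mem_setOf_eq]
    constructor
    · rintro ⟨hz, -, hz2⟩; exact ⟨hz, hz2, fun h => h2 (h ▸ hz)⟩
    · rintro ⟨hz, hz2, -⟩; exact ⟨hz, fun h => h1 (h ▸ hz), hz2⟩
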